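/- arXiv:1604.00596 — 7 statements merged into one kernel-verified Lean document; each statement's English description precedes it below -/
import Mathlib

section
/- For a right-continuous function f : [0,1] → ℝ with left limits (càdlàg) and t ∈ (0,1], the quantity var(f, t−) := inf_{t' ∈ [0,t)} var(f|[t',t]) takes values only in the two-element set {|Δf(t)|, ∞}, where Δf(t) = f(t) − f(t−). -/
/-!
Write `V y` for the variation of `f` on `[y, x]` and `l` for the left limit of `f` at `x`.
Every `V y` with `y < x` dominates the jump `edist (f x) l`. If some `V a` is finite, then `f`
has bounded variation on `[a, x]`, so `V y` tends to the jump as `y → x⁻`; hence the infimum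
of `V` is the jump unless `V` is identically `∞`.
-/

open Set Filter Topology

variable {α E : Type*} [LinearOrder α] [TopologicalSpace α] [OrderTopology α]
  [PseudoEMetricSpace E] {f : α → E} {a x : α} {l : E}

theorem edist_le_eVariationOn_Icc_of_tendsto_nhdsLT [DenselyOrdered α] (hax : a < x)
    (hl : Tendsto f (𝓝[<] x) (𝓝 l)) :
    edist (f x) l ≤ eVariationOn f (Icc a x) := by
  have := nhdsLT_neBot_of_exists_lt ⟨a, hax⟩
  refine le_of_tendsto (tendsto_const_nhds.edist hl) ?_
  filter_upwards [Ioo_mem_nhdsLT hax] with y hy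
  exact eVariationOn.edist_le f (right_mem_Icc.2 hax.le) ⟨hy.1.le, hy.2.le⟩

theorem BoundedVariationOn.tendsto_eVariationOn_Icc_nhdsLT (hf : BoundedVariationOn f (Icc a x))
    (hax : a < x) (hl : Tendsto f (𝓝[<] x) (𝓝 l)) :
    Tendsto (fun y ↦ eVariationOn f (Icc y x)) (𝓝[<] x) (𝓝 (edist (f x) l)) := by
  have hnhds : 𝓝[Icc a x ∩ Iio x] x = 𝓝[<] x := by
    rw [show Icc a x ∩ Iio x = Ico a x by grind, nhdsWithin_Ico_eq_nhdsLT hax]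
  rw [← hnhds] at hl ⊢
  refine (hf.tendsto_eVariationOn_Icc_left hl (right_mem_Icc.2 hax.le)).congr' ?_
  rw [hnhds]
  filter_upwards [Ioo_mem_nhdsLT hax] with y hy
  rw [Icc_inter_Icc, max_eq_right hy.1.le, min_self]

theorem iInf_eVariationOn_Icc_mem_pair [DenselyOrdered α] {b : α}
    (hl : Tendsto f (𝓝[Ico b x] x) (𝓝 l)) :
    ⨅ y : Ico b x, eVariationOn f (Icc y x) ∈ ({edist (f x) l, ⊤} : Set ENNReal) := by
  rcases eq_or_ne (⨅ y : Ico b x, eVariationOn f (Icc y x)) ⊤ with htop | htop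
  · exact Or.inr htop
  obtain ⟨⟨a, hba, hax⟩, ha⟩ := iInf_lt_iff.1 htop.lt_top
  have hbx : b < x := hba.trans_lt hax
  rw [nhdsWithin_Ico_eq_nhdsLT hbx] at hl
  refine Or.inl (le_antisymm ?_ ?_)
  · have := nhdsLT_neBot_of_exists_lt ⟨b, hbx⟩
    refine ge_of_tendsto (BoundedVariationOn.tendsto_eVariationOn_Icc_nhdsLT ha.ne hax hl) ?_
    filter_upwards [Ico_mem_nhdsLT hbx] with y hy
    exact iInf_le (fun y : Ico b x ↦ eVariationOn f (Icc y x)) ⟨y, hy⟩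
  · exact le_iInf fun y ↦ edist_le_eVariationOn_Icc_of_tendsto_nhdsLT y.2.2 hl

theorem varLeft_mem_pair_general (f : ℝ → ℝ) (t : ℝ) (L : ℝ)
    (hleft : Filter.Tendsto f (nhdsWithin t (Set.Ico 0 t)) (nhds L)) :
    (⨅ t' : Set.Ico (0:ℝ) t, eVariationOn f (Set.Icc t'.1 t)) ∈
      ({ENNReal.ofReal |f t - L|, ⊤} : Set ENNReal) := by
  simpa only [edist_dist, Real.dist_eq] using iInf_eVariationOn_Icc_mem_pair hleft

/-- For a càdlàg `f` and `t ∈ (0,1]`, `var(f, t−)` takes only the values `|Δf(t)|` and `∞`. -/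
theorem varLeft_mem_pair (f : ℝ → ℝ) (t : ℝ) (ht : t ∈ Set.Ioc (0:ℝ) 1)
    (hright : ∀ s ∈ Set.Ico (0:ℝ) 1, Filter.Tendsto f (nhdsWithin s (Set.Ici s)) (nhds (f s)))
    (L : ℝ)
    (hleft : Filter.Tendsto f (nhdsWithin t (Set.Ico 0 t)) (nhds L))
    (hleftlim : ∀ s ∈ Set.Ioc (0:ℝ) 1, ∃ M : ℝ,
      Filter.Tendsto f (nhdsWithin s (Set.Ico 0 s)) (nhds M)) :
    (⨅ t' : Set.Ico (0:ℝ) t, eVariationOn f (Set.Icc t'.1 t)) ∈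
      ({ENNReal.ofReal |f t - L|, ⊤} : Set ENNReal) :=
  varLeft_mem_pair_general f t L hleft
end

section
/- For f : [0,1] → ℝ and t ∈ [0,1), the quantity var(f, t+) := inf_{t' ∈ (t,1]} var(f|[t,t']) takes values only in the two-element set {0, ∞}, provided f is right-continuous at t. -/
/-!
If the variation of `f` on some `[t, b]` with `t < b` is finite, then `f` has bounded variation
there, and for such a function right-continuity at `t` forces the variation on `[t, y]` to tend
to `0` as `y ↓ t`; the infimum is then `0`. Otherwise every term of the infimum is `∞`.
-/

open Set Filter Topology

variable {α E : Type*} [LinearOrder α] [TopologicalSpace α] [OrderTopology α]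
  [PseudoEMetricSpace E] {f : α → E} {a : α}

theorem tendsto_eVariationOn_Icc_nhdsGT_zero {b : α} (hab : a < b)
    (hb : eVariationOn f (Icc a b) ≠ ⊤) (hf : ContinuousWithinAt f (Ici a) a) :
    Tendsto (fun y ↦ eVariationOn f (Icc a y)) (𝓝[>] a) (𝓝 0) := by
  have hbv : BoundedVariationOn f (Icc a b) := hb
  have hlim := hbv.tendsto_eVariationOn_Icc_zero_right a (hf.mono inter_subset_right)
  have hfilter : 𝓝[>] a ≤ 𝓝[Icc a b] a := by
    rw [← nhdsWithin_Ioc_eq_nhdsGT hab]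
    exact nhdsWithin_mono _ Ioc_subset_Icc_self
  refine (hlim.mono_left hfilter).congr' ?_
  filter_upwards [Ioc_mem_nhdsGT hab] with y hy
  rw [inter_eq_right.2 (Icc_subset_Icc_right hy.2)]

theorem iInf_eVariationOn_Icc_mem_zero_top [DenselyOrdered α] (c : α)
    (hf : ContinuousWithinAt f (Ici a) a) :
    (⨅ b : Ioc a c, eVariationOn f (Icc a b.1)) ∈ ({0, ⊤} : Set ENNReal) := by
  by_cases hfin : ∃ b : Ioc a c, eVariationOn f (Icc a b.1) ≠ ⊤
  · obtain ⟨⟨b, hab, hbc⟩, hb⟩ := hfin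
    have : (𝓝[>] a).NeBot := nhdsGT_neBot_of_exists_gt ⟨b, hab⟩
    left
    refine le_antisymm (ge_of_tendsto (tendsto_eVariationOn_Icc_nhdsGT_zero hab hb hf) ?_) bot_le
    filter_upwards [Ioc_mem_nhdsGT hab] with y hy
    exact iInf_le (fun b : Ioc a c ↦ eVariationOn f (Icc a b.1)) ⟨y, hy.1, hy.2.trans hbc⟩
  · push Not at hfin
    exact Or.inr (iInf_eq_top.2 hfin)

theorem varRight_mem_pair_general (f : ℝ → ℝ) (t : ℝ)
    (hright : Filter.Tendsto f (nhdsWithin t (Set.Ici t)) (nhds (f t))) :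
    (⨅ t' : Set.Ioc t 1, eVariationOn f (Set.Icc t t'.1)) ∈
      ({0, ⊤} : Set ENNReal) :=
  iInf_eVariationOn_Icc_mem_zero_top 1 hright

/-- For `f` right-continuous at `t ∈ [0,1)`, `var(f, t+)` takes only the values `0` and `∞`. -/
theorem varRight_mem_pair (f : ℝ → ℝ) (t : ℝ) (ht : t ∈ Set.Ico (0:ℝ) 1)
    (hright : Filter.Tendsto f (nhdsWithin t (Set.Ici t)) (nhds (f t))) :
    (⨅ t' : Set.Ioc t 1, eVariationOn f (Set.Icc t t'.1)) ∈
      ({0, ⊤} : Set ENNReal) :=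
  varRight_mem_pair_general f t hright
end

section
/- Let Ω be a set, ≼ a well-order on Ω, and for a function ω ∈ Ω of type [0,1] → ℝ and a ∈ [0,1], let ω^a denote the ≼-least element ω' of Ω with ω'|[0,a] = ω|[0,a]. Then the set W_ω := {t ∈ [0,1] : for all t' ∈ (t,1], ω^{t'} ≠ ω^t} is well-ordered by ≤. -/
/-! A set of reals along which some map into a well-founded relation strictly increases is
well-ordered, so it suffices that `pred` increases along `W_ω`. For `s < t` in `W_ω`, `pred t`
agrees with `ω` on `[0, t] ⊇ [0, s]`, so minimality of `pred s` rules out `pred t ≺ pred s`;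
and `pred t ≠ pred s` by definition of `W_ω`. -/

theorem Set.isWF_of_rel_map {α β : Type*} [Preorder α] {s : Set α} {r : β → β → Prop}
    (hr : WellFounded r) (f : α → β) (hf : ∀ a ∈ s, ∀ b ∈ s, a < b → r (f a) (f b)) :
    s.IsWF :=
  Subrelation.wf (fun {a b} hab => hf a a.2 b b.2 hab) (InvImage.wf (fun a : s => f a) hr)

theorem rel_of_ne_of_not_rel {β : Type*} {r : β → β → Prop} [Std.Trichotomous r] {a b : β}
    (hne : a ≠ b) (hnot : ¬ r b a) : r a b :=
  (trichotomous_of r a b).resolve_right (not_or_intro hne hnot)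

/-- The set `W_ω` of times after which the Ockham prediction changes is well-ordered by `≤`. -/
theorem ockham_W_isWF
    (Ω : Set (ℝ → ℝ)) (r : Ω → Ω → Prop) (hr : IsWellOrder Ω r)
    (ω : Ω) (pred : ℝ → Ω)
    (hagree : ∀ a ∈ Set.Icc (0:ℝ) 1,
      Set.EqOn ((pred a : ℝ → ℝ)) (ω : ℝ → ℝ) (Set.Icc 0 a))
    (hleast : ∀ a ∈ Set.Icc (0:ℝ) 1, ∀ ω' : Ω,
      Set.EqOn (ω' : ℝ → ℝ) (ω : ℝ → ℝ) (Set.Icc 0 a) → ¬ r ω' (pred a)) :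
    Set.IsWF {t | t ∈ Set.Icc (0:ℝ) 1 ∧ ∀ t' ∈ Set.Ioc t 1, pred t' ≠ pred t} := by
  refine Set.isWF_of_rel_map hr.wf pred fun s ⟨hs, hchange⟩ t ⟨ht, _⟩ hst => ?_
  have hne : pred s ≠ pred t := (hchange t ⟨hst, ht.2⟩).symm
  have hnot : ¬ r (pred t) (pred s) :=
    hleast s hs (pred t) ((hagree t ht).mono (Set.Icc_subset_Icc le_rfl hst.le))
  exact rel_of_ne_of_not_rel hne hnot
end

section
/- Let Ω be a set of functions [0,1] → ℝ, ≼ a well-order on Ω, and for ω ∈ Ω and a ∈ [0,1] let ω^a be the ≼-least element of Ω agreeing with ω on [0,a]. Then for every t ∈ [0,1) there exists t' > t such that the map s ↦ ω^s is constant on (t, t'); consequently ω^s agrees with ω on [0, s] for all s ∈ (t, t'), hence ω^s|[t,t'] agrees with ω on [t, s] for each such s. -/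
/-!
The prediction `ω^s` can only move down the well-order as `s` grows, because `ω^{s'}` agrees
with `ω` on `[0,s] ⊆ [0,s']` and so competes in the definition of `ω^s`. Let `ω^{t'}` be the
least prediction over `s ∈ (t,1]`; for `s ∈ (t,t']` it lies neither above `ω^s` (by minimality)
nor below it (by monotonicity), so `ω^s = ω^{t'}`.
-/

theorem exists_eqOn_Iic_of_not_rel_of_le {α β : Type*} [Preorder β] {r : α → α → Prop}
    (hr : IsWellOrder α r) {f : β → α} {S : Set β} (hS : S.Nonempty)
    (hf : ∀ b ∈ S, ∀ b' ∈ S, b ≤ b' → ¬ r (f b') (f b)) :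
    ∃ b₀ ∈ S, Set.EqOn f (Function.const β (f b₀)) (S ∩ Set.Iic b₀) := by
  obtain ⟨_, ⟨b₀, hb₀, rfl⟩, hmin⟩ := hr.wf.has_min (f '' S) (hS.image f)
  exact ⟨b₀, hb₀, fun b ⟨hb, hle⟩ =>
    hr.trichotomous _ _ (hmin _ (Set.mem_image_of_mem f hb)) (hf b hb b₀ hb₀ hle)⟩

theorem not_rel_pred_of_le {Ω : Set (ℝ → ℝ)} {r : Ω → Ω → Prop} {ω : Ω} {pred : ℝ → Ω}
    (hagree : ∀ a ∈ Set.Icc (0:ℝ) 1,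
      Set.EqOn ((pred a : ℝ → ℝ)) (ω : ℝ → ℝ) (Set.Icc 0 a))
    (hleast : ∀ a ∈ Set.Icc (0:ℝ) 1, ∀ ω' : Ω,
      Set.EqOn (ω' : ℝ → ℝ) (ω : ℝ → ℝ) (Set.Icc 0 a) → ¬ r ω' (pred a))
    {a a' : ℝ} (ha : 0 ≤ a) (hle : a ≤ a') (ha' : a' ≤ 1) :
    ¬ r (pred a') (pred a) :=
  hleast a ⟨ha, hle.trans ha'⟩ (pred a')
    ((hagree a' ⟨ha.trans hle, ha'⟩).mono (Set.Icc_subset_Icc_right hle))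

/-- For every `t ∈ [0,1)` there is `t' > t` such that `s ↦ ω^s` is constant on `(t,t')`;
consequently each such prediction agrees with `ω` on `[0,s]`, hence on `[t,s]`. -/
theorem ockham_eventually_constant
    (Ω : Set (ℝ → ℝ)) (r : Ω → Ω → Prop) (hr : IsWellOrder Ω r)
    (ω : Ω) (pred : ℝ → Ω)
    (hagree : ∀ a ∈ Set.Icc (0:ℝ) 1,
      Set.EqOn ((pred a : ℝ → ℝ)) (ω : ℝ → ℝ) (Set.Icc 0 a))
    (hleast : ∀ a ∈ Set.Icc (0:ℝ) 1, ∀ ω' : Ω,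
      Set.EqOn (ω' : ℝ → ℝ) (ω : ℝ → ℝ) (Set.Icc 0 a) → ¬ r ω' (pred a))
    (t : ℝ) (ht : t ∈ Set.Ico (0:ℝ) 1) :
    ∃ t' ∈ Set.Ioc t 1,
      (∀ s ∈ Set.Ioo t t', ∀ s'' ∈ Set.Ioo t t', pred s = pred s'') ∧
      (∀ s ∈ Set.Ioo t t',
        Set.EqOn ((pred s : ℝ → ℝ)) (ω : ℝ → ℝ) (Set.Icc 0 s) ∧
        Set.EqOn ((pred s : ℝ → ℝ)) (ω : ℝ → ℝ) (Set.Icc t s)) := by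
  obtain ⟨ht0, ht1⟩ := ht
  obtain ⟨t', ht', hconst⟩ := exists_eqOn_Iic_of_not_rel_of_le hr (f := pred)
    (S := Set.Ioc t 1) ⟨1, ht1, le_rfl⟩
    fun a ha a' ha' hle => not_rel_pred_of_le hagree hleast (ht0.trans ha.1.le) hle ha'.2
  have hIoo : ∀ s ∈ Set.Ioo t t', s ∈ Set.Ioc t 1 := fun s hs => ⟨hs.1, hs.2.le.trans ht'.2⟩
  refine ⟨t', ht', fun s hs s'' hs'' => ?_, fun s hs => ?_⟩
  · exact (hconst ⟨hIoo s hs, hs.2.le⟩).trans (hconst ⟨hIoo s'' hs'', hs''.2.le⟩).symm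
  · have h0s := hagree s ⟨ht0.trans (hIoo s hs).1.le, (hIoo s hs).2⟩
    exact ⟨h0s, h0s.mono (Set.Icc_subset_Icc_left ht0)⟩
end

section
/- With Ω, ≼, ω^s, and F_ω as in the definition of the Ockham prediction failure set, for any t ∈ F_ω with t < 1, if t' is the least element of F_ω strictly greater than t (the successor of t in F_ω), then the function s ↦ ω^s is constant on the open interval (t, t'). -/
/-!
If `ω^a = ω^c` with `a ≤ b ≤ c`, then `ω^a` and `ω^b` agree with `ω` on `[0, b]` resp. `[0, a]`,
so minimality of each gives that neither is strictly below the other: the fibres of `s ↦ ω^s`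
are intervals. A point strictly between `t` and its successor in `F_ω` is not in `F_ω`, so it
shares its value with a point on either side, and hence `s ↦ ω^s` is locally constant on the
gap. The gap is connected, so the map is constant there.
-/

open Set Filter Topology

theorem eventually_eq_of_ordConnected_fiber {X α : Type*} [LinearOrder X] [TopologicalSpace X]
    [OrderClosedTopology X] {f : X → α} {s : Set X} {x u v : X}
    (hfib : (s ∩ f ⁻¹' {f x}).OrdConnected) (hv : v ∈ s) (hu : u ∈ s)
    (hvx : v < x) (hxu : x < u) (hfv : f v = f x) (hfu : f u = f x) :
    ∀ᶠ y in 𝓝 x, f y = f x :=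
  mem_of_superset (Icc_mem_nhds hvx hxu) fun _ hy => (hfib.out ⟨hv, hfv⟩ ⟨hu, hfu⟩ hy).2

theorem ordConnected_pred_fiber {X : Type*} {Ω : Set (ℝ → X)} {r : Ω → Ω → Prop}
    [Std.Trichotomous r] {ω : Ω} {pred : ℝ → Ω}
    (hagree : ∀ a ∈ Icc (0:ℝ) 1, EqOn (pred a : ℝ → X) ω (Icc 0 a))
    (hleast : ∀ a ∈ Icc (0:ℝ) 1, ∀ ω' : Ω, EqOn (ω' : ℝ → X) ω (Icc 0 a) → ¬ r ω' (pred a))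
    (ω' : Ω) : (Icc (0:ℝ) 1 ∩ pred ⁻¹' {ω'}).OrdConnected := by
  refine ⟨fun a ⟨ha, hpa⟩ c ⟨hc, hpc⟩ b ⟨hab, hbc⟩ => ?_⟩
  have hb : b ∈ Icc (0:ℝ) 1 := ⟨ha.1.trans hab, hbc.trans hc.2⟩
  refine ⟨hb, ?_⟩
  have hba : ¬ r (pred b) (pred a) :=
    hleast a ha (pred b) fun y hy => hagree b hb ⟨hy.1, hy.2.trans hab⟩
  have hab' : ¬ r (pred a) (pred b) := by
    refine hleast b hb (pred a) fun y hy => ?_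
    rw [show pred a = pred c from hpa.trans hpc.symm]
    exact hagree c hc ⟨hy.1, hy.2.trans hbc⟩
  exact (Std.Trichotomous.trichotomous _ _ hab' hba).symm.trans hpa

theorem ockham_constant_on_F_gaps_general
    (Ω : Set (ℝ → ℝ)) (r : Ω → Ω → Prop) (hr : IsWellOrder Ω r)
    (ω : Ω) (pred : ℝ → Ω)
    (hagree : ∀ a ∈ Set.Icc (0:ℝ) 1,
      Set.EqOn ((pred a : ℝ → ℝ)) (ω : ℝ → ℝ) (Set.Icc 0 a))
    (hleast : ∀ a ∈ Set.Icc (0:ℝ) 1, ∀ ω' : Ω,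
      Set.EqOn (ω' : ℝ → ℝ) (ω : ℝ → ℝ) (Set.Icc 0 a) → ¬ r ω' (pred a))
    (F : Set ℝ)
    (hF : F = {t | t ∈ Set.Icc (0:ℝ) 1 ∧
      ((∀ t' ∈ Set.Ioc t 1, pred t' ≠ pred t) ∨
       (∀ t' ∈ Set.Ico (0:ℝ) t, pred t' ≠ pred t))})
    (t t' : ℝ) (htF : t ∈ F)
    (ht'F : t' ∈ F)
    (hsucc : ∀ s ∈ F, t < s → t' ≤ s) :
    ∀ s ∈ Set.Ioo t t', ∀ s'' ∈ Set.Ioo t t', pred s = pred s'' := by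
  have hloc : ∀ m ∈ Ioo t t', ∀ᶠ y in 𝓝 m, pred y = pred m := by
    intro m hm
    have hmF : m ∉ F := fun h => (hsucc m h hm.1).not_gt hm.2
    subst hF
    have hm : m ∈ Icc (0:ℝ) 1 := ⟨htF.1.1.trans hm.1.le, hm.2.le.trans ht'F.1.2⟩
    simp only [mem_ofPred_eq, hm, true_and, not_or, not_forall, not_not] at hmF
    obtain ⟨⟨u, hu, hum⟩, ⟨v, hv, hvm⟩⟩ := hmF
    exact eventually_eq_of_ordConnected_fiber (ordConnected_pred_fiber (r := r) hagree hleast _)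
      ⟨hv.1, hv.2.le.trans hm.2⟩ ⟨hm.1.trans hu.1.le, hu.2⟩ hv.2 hu.1 hvm hum
  intro s hs s'' hs''
  exact isPreconnected_Ioo.induction₂ (fun x y => pred x = pred y)
    (fun x hx => nhdsWithin_le_nhds ((hloc x hx).mono fun _ => Eq.symm))
    (fun _ _ _ _ _ _ => Eq.trans) (fun _ _ _ _ => Eq.symm) hs hs''

/-- On each successor gap of the failure set `F_ω`, the map `s ↦ ω^s` is constant. -/
theorem ockham_constant_on_F_gaps
    (Ω : Set (ℝ → ℝ)) (r : Ω → Ω → Prop) (hr : IsWellOrder Ω r)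
    (ω : Ω) (pred : ℝ → Ω)
    (hagree : ∀ a ∈ Set.Icc (0:ℝ) 1,
      Set.EqOn ((pred a : ℝ → ℝ)) (ω : ℝ → ℝ) (Set.Icc 0 a))
    (hleast : ∀ a ∈ Set.Icc (0:ℝ) 1, ∀ ω' : Ω,
      Set.EqOn (ω' : ℝ → ℝ) (ω : ℝ → ℝ) (Set.Icc 0 a) → ¬ r ω' (pred a))
    (F : Set ℝ)
    (hF : F = {t | t ∈ Set.Icc (0:ℝ) 1 ∧
      ((∀ t' ∈ Set.Ioc t 1, pred t' ≠ pred t) ∨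
       (∀ t' ∈ Set.Ico (0:ℝ) t, pred t' ≠ pred t))})
    (t t' : ℝ) (htF : t ∈ F) (ht1 : t < 1)
    (ht'F : t' ∈ F) (htt' : t < t')
    (hsucc : ∀ s ∈ F, t < s → t' ≤ s) :
    ∀ s ∈ Set.Ioo t t', ∀ s'' ∈ Set.Ioo t t', pred s = pred s'' :=
  ockham_constant_on_F_gaps_general Ω r hr ω pred hagree hleast F hF t t' htF ht'F hsucc
end

section
/- Let W ⊆ [0,1] be any set well-ordered by ≤ and containing 1. Then there exist a well-order ≼ on the set Ω = C[0,1] of continuous real functions on [0,1] and ω ∈ Ω such that W_ω = W, where W_ω := {t ∈ [0,1] : ∀ t' ∈ (t,1], ω^{t'} ≠ ω^t} and ω^a is the ≼-least element of Ω agreeing with ω on [0,a]. -/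
/-!
Take `ω = id` and let the well-order begin with the truncations `t ↦ min t w`, `w ∈ W`, ordered
by `w`. For `a ∈ [0,1]` the least function agreeing with `ω` on `[0,a]` is then the truncation at
`⌈a⌉`, the least element of `W` that is `≥ a` (it exists since `W` is well-ordered and `1 ∈ W`).
So `ω^t` changes immediately after `t` exactly when `⌈t⌉ = t`, i.e. when `t ∈ W`.
-/

open Set InitialSeg

/-- Put `s` (transported along `e`) first and an arbitrary well-order on the complement of the
range after it. -/
theorem Function.Embedding.exists_initialSeg {α β : Type*} (s : α → α → Prop) [IsWellOrder α s]
    (e : α ↪ β) : ∃ (r : β → β → Prop) (_ : IsWellOrder β r) (f : s ≼i r), ⇑f = e := by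
  classical
  let E : α ⊕ ↥(range e)ᶜ ≃ β :=
    (Equiv.sumCongr (Equiv.ofInjective e e.injective) (Equiv.refl _)).trans (Equiv.Set.sumCompl _)
  let iso := RelIso.preimage E.symm (Sum.Lex s WellOrderingRel)
  refine ⟨_, iso.toRelEmbedding.isWellOrder,
    (InitialSeg.leAdd s _).trans iso.symm.toInitialSeg, ?_⟩
  ext a
  change E (Sum.inl a) = e a
  simp [E]

section WFCeil

variable {α : Type*} [LinearOrder α] {s : Set α} {m : α}

/-- The least element of `s` above `a`, which exists as long as `a ≤ m ∈ s`; junk value `m`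
otherwise. -/
noncomputable def Set.IsWF.ceil (hs : s.IsWF) (hm : m ∈ s) (a : α) : α :=
  if h : a ≤ m then (hs.mono inter_subset_left).min ⟨m, hm, h⟩ else m

variable (hs : s.IsWF) (hm : m ∈ s)

theorem Set.IsWF.ceil_mem (a : α) : hs.ceil hm a ∈ s := by
  unfold Set.IsWF.ceil
  split_ifs with h
  · exact ((hs.mono inter_subset_left).min_mem ⟨m, hm, h⟩).1
  · exact hm

theorem Set.IsWF.le_ceil {a : α} (ha : a ≤ m) : a ≤ hs.ceil hm a := by
  rw [Set.IsWF.ceil, dif_pos ha]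
  exact ((hs.mono inter_subset_left).min_mem ⟨m, hm, ha⟩).2

theorem Set.IsWF.ceil_le {a b : α} (ha : a ≤ m) (hb : b ∈ s) (hab : a ≤ b) :
    hs.ceil hm a ≤ b := by
  rw [Set.IsWF.ceil, dif_pos ha]
  exact (hs.mono inter_subset_left).min_le _ ⟨hb, hab⟩

theorem Set.IsWF.ceil_eq_self {a : α} (ha : a ∈ s) (ham : a ≤ m) : hs.ceil hm a = a :=
  (hs.ceil_le hm ham ha le_rfl).antisymm (hs.le_ceil hm ham)

theorem Set.IsWF.forall_ceil_ne_iff {a : α} (ham : a ≤ m) :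
    (∀ b ∈ Ioc a m, hs.ceil hm b ≠ hs.ceil hm a) ↔ a ∈ s := by
  refine ⟨fun h => by_contra fun ha => ?_, fun ha b ⟨hab, hbm⟩ => ?_⟩
  · have hlt : a < hs.ceil hm a :=
      (hs.le_ceil hm ham).lt_of_ne fun h => ha (h ▸ hs.ceil_mem hm a)
    have hle : hs.ceil hm a ≤ m := hs.ceil_le hm ham hm ham
    exact h _ ⟨hlt, hle⟩ (hs.ceil_eq_self hm (hs.ceil_mem hm a) hle)
  · rw [hs.ceil_eq_self hm ha ham]
    exact (hab.trans_le (hs.le_ceil hm hbm)).ne'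

end WFCeil

abbrev UnitIntervalFn : Type := {f : ℝ → ℝ // ContinuousOn f (Icc 0 1)}

noncomputable def truncId (w : ℝ) : UnitIntervalFn :=
  ⟨fun t => min t w, (continuous_id.min continuous_const).continuousOn⟩

theorem truncId_eqOn_id_iff {a w : ℝ} (ha : 0 ≤ a) :
    EqOn (truncId w : ℝ → ℝ) id (Icc 0 a) ↔ a ≤ w :=
  ⟨fun h => min_eq_left_iff.mp (h ⟨ha, le_rfl⟩), fun h _ ht => min_eq_left (ht.2.trans h)⟩

theorem injOn_truncId : InjOn truncId (Iic 1) := fun w (hw : w ≤ 1) w' (hw' : w' ≤ 1) h => by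
  simpa [truncId, hw, hw'] using congrFun (congrArg Subtype.val h) 1

/-- Any well-ordered `W ⊆ [0,1]` containing `1` arises as `W_ω` for some well-order on `C[0,1]`
and some continuous `ω`. -/
theorem exists_ockham_realizing_W
    (W : Set ℝ) (hW : W ⊆ Set.Icc 0 1) (hWF : W.IsWF) (h1 : (1:ℝ) ∈ W) :
    ∃ (r : {f : ℝ → ℝ // ContinuousOn f (Set.Icc 0 1)} →
           {f : ℝ → ℝ // ContinuousOn f (Set.Icc 0 1)} → Prop),
      IsWellOrder {f : ℝ → ℝ // ContinuousOn f (Set.Icc 0 1)} r ∧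
      ∃ (ω : {f : ℝ → ℝ // ContinuousOn f (Set.Icc 0 1)})
        (pred : ℝ → {f : ℝ → ℝ // ContinuousOn f (Set.Icc 0 1)}),
        (∀ a ∈ Set.Icc (0:ℝ) 1,
          Set.EqOn ((pred a : ℝ → ℝ)) (ω : ℝ → ℝ) (Set.Icc 0 a) ∧
          ∀ ω' : {f : ℝ → ℝ // ContinuousOn f (Set.Icc 0 1)},
            Set.EqOn (ω' : ℝ → ℝ) (ω : ℝ → ℝ) (Set.Icc 0 a) → ¬ r ω' (pred a)) ∧
        {t | t ∈ Set.Icc (0:ℝ) 1 ∧ ∀ t' ∈ Set.Ioc t 1, pred t' ≠ pred t} = W := by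
  have : WellFoundedLT W := ⟨hWF⟩
  let e : W ↪ UnitIntervalFn :=
    ⟨fun w => truncId w, fun w w' h => Subtype.ext (injOn_truncId (hW w.2).2 (hW w'.2).2 h)⟩
  obtain ⟨r, hr, f, hf⟩ := e.exists_initialSeg (α := W) (· < ·)
  have hfw (w : W) : (f w : ℝ → ℝ) = truncId w := by rw [hf]; rfl
  let ceil (a : ℝ) : W := ⟨hWF.ceil h1 a, hWF.ceil_mem h1 a⟩
  refine ⟨r, hr, ⟨id, continuousOn_id⟩, fun a => f (ceil a), fun a ha => ⟨?_, ?_⟩, ?_⟩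
  · rw [hfw, truncId_eqOn_id_iff ha.1]
    exact hWF.le_ceil h1 ha.2
  · intro g hg hlt
    obtain ⟨w, rfl⟩ := f.mem_range_of_rel hlt
    rw [hfw, truncId_eqOn_id_iff ha.1] at hg
    exact (f.map_rel_iff.mp hlt).not_ge (hWF.ceil_le h1 ha.2 w.2 hg)
  · have hne {a b : ℝ} : f (ceil a) ≠ f (ceil b) ↔ hWF.ceil h1 a ≠ hWF.ceil h1 b :=
      f.injective.ne_iff.trans Subtype.ext_iff.not
    ext t
    simp only [mem_ofPred_eq, hne]
    exact ⟨fun ⟨ht, h⟩ => (hWF.forall_ceil_ne_iff h1 ht.2).mp h,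
      fun ht => ⟨hW ht, (hWF.forall_ceil_ne_iff h1 (hW ht).2).mpr ht⟩⟩
end

section
/- Let Ω = C[0,1], ≼ a well-order on Ω, ω^s the ≼-least continuous function agreeing with ω on [0,s], and W_ω := {t ∈ [0,1] : ∀ t' ∈ (t,1], ω^{t'} ≠ ω^t}. Then for any t ∈ W_ω with t < 1 and t' the successor of t in W_ω, the map s ↦ ω^s is constant on (t, t'). -/
/-!
For `a ≤ b` the function `ω^b` agrees with `ω` on `[0, a]`, so minimality of `ω^a` gives
`ω^a ≼ ω^b`; in particular `ω^b = ω^a` as soon as `ω^a` agrees with `ω` on `[0, b]`, and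
`s ↦ ω^s` is constant on `[a, b]` once `ω^a = ω^b`. A point `v` of the gap is not in `W`, so
`ω^u = ω^v` for some `u > v`. Given `a ≤ b` in the gap, let `c` be the supremum of the points
`v ∈ [a, b]` with `ω^v = ω^a`. Then `ω^a` agrees with `ω` on `[0, c)`, hence on `[0, c]` by
continuity, so `ω^c = ω^a`; and `c < b` is impossible since `ω^v = ω^c` for `v` slightly
larger than `c`.
-/

open Set

theorem Set.EqOn.Icc_of_Ico {α β : Type*} [TopologicalSpace α] [LinearOrder α] [OrderTopology α]
    [DenselyOrdered α] [TopologicalSpace β] [T2Space β] {f g : α → β} {a b : α} (hab : a < b)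
    (hf : ContinuousOn f (Icc a b)) (hg : ContinuousOn g (Icc a b)) (h : EqOn f g (Ico a b)) :
    EqOn f g (Icc a b) :=
  h.of_subset_closure hf hg Ico_subset_Icc_self (closure_Ico hab.ne).ge

local notation "𝒞" => {f : ℝ → ℝ // ContinuousOn f (Set.Icc 0 1)}

/-- `pred a` is the paper's `ω^a`. -/
structure IsLeastAgreeing (r : 𝒞 → 𝒞 → Prop) (ω : 𝒞) (pred : ℝ → 𝒞) : Prop where
  agree : ∀ a ∈ Icc (0:ℝ) 1, EqOn (pred a : ℝ → ℝ) ω (Icc 0 a)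
  least : ∀ a ∈ Icc (0:ℝ) 1, ∀ ω' : 𝒞, EqOn (ω' : ℝ → ℝ) ω (Icc 0 a) → ¬ r ω' (pred a)

namespace IsLeastAgreeing

variable {r : 𝒞 → 𝒞 → Prop} {ω : 𝒞} {pred : ℝ → 𝒞}

theorem not_rel_of_le (h : IsLeastAgreeing r ω pred) {a b : ℝ} (ha : a ∈ Icc (0:ℝ) 1)
    (hb : b ∈ Icc (0:ℝ) 1) (hab : a ≤ b) : ¬ r (pred b) (pred a) :=
  h.least a ha (pred b) ((h.agree b hb).mono (Icc_subset_Icc_right hab))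

theorem eq_of_eqOn [Std.Trichotomous r] (h : IsLeastAgreeing r ω pred) {a b : ℝ}
    (ha : a ∈ Icc (0:ℝ) 1) (hb : b ∈ Icc (0:ℝ) 1) (hab : a ≤ b)
    (hab_agree : EqOn (pred a : ℝ → ℝ) ω (Icc 0 b)) : pred b = pred a :=
  Std.Trichotomous.trichotomous _ _ (h.not_rel_of_le ha hb hab) (h.least b hb (pred a) hab_agree)

theorem eq_of_le_of_le [Std.Trichotomous r] (h : IsLeastAgreeing r ω pred) {a v u : ℝ}
    (ha : 0 ≤ a) (hu : u ≤ 1) (hav : a ≤ v) (hvu : v ≤ u) (hua : pred u = pred a) :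
    pred v = pred a :=
  h.eq_of_eqOn ⟨ha, hav.trans (hvu.trans hu)⟩ ⟨ha.trans hav, hvu.trans hu⟩ hav
    (hua ▸ (h.agree u ⟨ha.trans (hav.trans hvu), hu⟩).mono (Icc_subset_Icc_right hvu))

theorem eq_of_forall_lt_exists [Std.Trichotomous r] (h : IsLeastAgreeing r ω pred) {a c : ℝ}
    (ha : 0 < a) (hac : a ≤ c) (hc : c ≤ 1)
    (hfreq : ∀ x < c, ∃ v ∈ Icc a c, x < v ∧ pred v = pred a) : pred c = pred a := by
  have hIco : EqOn (pred a : ℝ → ℝ) ω (Ico 0 c) := fun x hx => by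
    obtain ⟨v, hv, hxv, hva⟩ := hfreq x hx.2
    rw [← hva]
    exact h.agree v ⟨ha.le.trans hv.1, hv.2.trans hc⟩ ⟨hx.1, hxv.le⟩
  have hIcc : EqOn (pred a : ℝ → ℝ) ω (Icc 0 c) :=
    hIco.Icc_of_Ico (ha.trans_le hac) ((pred a).2.mono (Icc_subset_Icc_right hc))
      (ω.2.mono (Icc_subset_Icc_right hc))
  exact h.eq_of_eqOn ⟨ha.le, hac.trans hc⟩ ⟨(ha.trans_le hac).le, hc⟩ hac hIcc

theorem eq_of_forall_exists_gt [Std.Trichotomous r] (h : IsLeastAgreeing r ω pred) {a b : ℝ}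
    (ha : 0 < a) (hab : a ≤ b) (hb : b ≤ 1)
    (hext : ∀ v ∈ Ico a b, ∃ u ∈ Ioc v 1, pred u = pred v) : pred b = pred a := by
  set S := {v ∈ Icc a b | pred v = pred a}
  have haS : a ∈ S := ⟨⟨le_rfl, hab⟩, rfl⟩
  have hSne : S.Nonempty := ⟨a, haS⟩
  have hSbdd : BddAbove S := ⟨b, fun v hv => hv.1.2⟩
  set c := sSup S
  have hac : a ≤ c := le_csSup hSbdd haS
  have hcb : c ≤ b := csSup_le hSne fun v hv => hv.1.2
  have hca : pred c = pred a := h.eq_of_forall_lt_exists ha hac (hcb.trans hb) fun x hx => by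
    obtain ⟨v, hv, hxv⟩ := exists_lt_of_lt_csSup hSne hx
    exact ⟨v, ⟨hv.1.1, le_csSup hSbdd hv⟩, hxv, hv.2⟩
  obtain hcb | hcb := hcb.lt_or_eq
  · obtain ⟨u, ⟨hcu, hu1⟩, hu⟩ := hext c ⟨hac, hcb⟩
    have hcw : c ≤ min u b := le_min hcu.le hcb.le
    have hw : pred (min u b) = pred a :=
      (h.eq_of_le_of_le (ha.le.trans hac) hu1 hcw (min_le_left _ _) hu).trans hca
    exact absurd (le_csSup hSbdd ⟨⟨hac.trans hcw, min_le_right _ _⟩, hw⟩) (lt_min hcu hcb).not_ge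
  · exact hcb ▸ hca

end IsLeastAgreeing

theorem ockham_constant_on_W_gaps_continuous_general
    (r : {f : ℝ → ℝ // ContinuousOn f (Set.Icc 0 1)} →
         {f : ℝ → ℝ // ContinuousOn f (Set.Icc 0 1)} → Prop)
    (hr : IsWellOrder {f : ℝ → ℝ // ContinuousOn f (Set.Icc 0 1)} r)
    (ω : {f : ℝ → ℝ // ContinuousOn f (Set.Icc 0 1)})
    (pred : ℝ → {f : ℝ → ℝ // ContinuousOn f (Set.Icc 0 1)})
    (hagree : ∀ a ∈ Set.Icc (0:ℝ) 1,
      Set.EqOn ((pred a : ℝ → ℝ)) (ω : ℝ → ℝ) (Set.Icc 0 a))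
    (hleast : ∀ a ∈ Set.Icc (0:ℝ) 1,
      ∀ ω' : {f : ℝ → ℝ // ContinuousOn f (Set.Icc 0 1)},
        Set.EqOn (ω' : ℝ → ℝ) (ω : ℝ → ℝ) (Set.Icc 0 a) → ¬ r ω' (pred a))
    (W : Set ℝ)
    (hWdef : W = {t | t ∈ Set.Icc (0:ℝ) 1 ∧ ∀ t' ∈ Set.Ioc t 1, pred t' ≠ pred t})
    (t t' : ℝ) (htW : t ∈ W)
    (ht'W : t' ∈ W)
    (hsucc : ∀ s ∈ W, t < s → t' ≤ s) :
    ∀ s ∈ Set.Ioo t t', ∀ s'' ∈ Set.Ioo t t', pred s = pred s'' := by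
  have hω : IsLeastAgreeing r ω pred := ⟨hagree, hleast⟩
  subst hWdef
  obtain ⟨⟨ht0, -⟩, -⟩ := htW
  obtain ⟨⟨-, ht'1⟩, -⟩ := ht'W
  have hext : ∀ v ∈ Ioo t t', ∃ u ∈ Ioc v 1, pred u = pred v := fun v hv => by
    by_contra! hne
    exact (hsucc v ⟨⟨ht0.trans hv.1.le, hv.2.le.trans ht'1⟩, hne⟩ hv.1).not_gt hv.2
  have hmono : ∀ s ∈ Ioo t t', ∀ s'' ∈ Ioo t t', s ≤ s'' → pred s'' = pred s :=
    fun s hs s'' hs'' hle => hω.eq_of_forall_exists_gt (ht0.trans_lt hs.1) hle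
      (hs''.2.le.trans ht'1) fun v hv => hext v ⟨hs.1.trans_le hv.1, hv.2.trans hs''.2⟩
  intro s hs s'' hs''
  rcases le_total s s'' with hle | hle
  · exact (hmono s hs s'' hs'' hle).symm
  · exact hmono s'' hs'' s hs hle

/-- For `Ω = C[0,1]`, on each successor gap of `W_ω` the map `s ↦ ω^s` is constant. -/
theorem ockham_constant_on_W_gaps_continuous
    (r : {f : ℝ → ℝ // ContinuousOn f (Set.Icc 0 1)} →
         {f : ℝ → ℝ // ContinuousOn f (Set.Icc 0 1)} → Prop)
    (hr : IsWellOrder {f : ℝ → ℝ // ContinuousOn f (Set.Icc 0 1)} r)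
    (ω : {f : ℝ → ℝ // ContinuousOn f (Set.Icc 0 1)})
    (pred : ℝ → {f : ℝ → ℝ // ContinuousOn f (Set.Icc 0 1)})
    (hagree : ∀ a ∈ Set.Icc (0:ℝ) 1,
      Set.EqOn ((pred a : ℝ → ℝ)) (ω : ℝ → ℝ) (Set.Icc 0 a))
    (hleast : ∀ a ∈ Set.Icc (0:ℝ) 1,
      ∀ ω' : {f : ℝ → ℝ // ContinuousOn f (Set.Icc 0 1)},
        Set.EqOn (ω' : ℝ → ℝ) (ω : ℝ → ℝ) (Set.Icc 0 a) → ¬ r ω' (pred a))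
    (W : Set ℝ)
    (hWdef : W = {t | t ∈ Set.Icc (0:ℝ) 1 ∧ ∀ t' ∈ Set.Ioc t 1, pred t' ≠ pred t})
    (t t' : ℝ) (htW : t ∈ W) (ht1 : t < 1)
    (ht'W : t' ∈ W) (htt' : t < t')
    (hsucc : ∀ s ∈ W, t < s → t' ≤ s) :
    ∀ s ∈ Set.Ioo t t', ∀ s'' ∈ Set.Ioo t t', pred s = pred s'' :=
  ockham_constant_on_W_gaps_continuous_general r hr ω pred hagree hleast W hWdef t t' htW ht'W hsucc
end
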